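/- arXiv:1601.01496 — 4 statements merged into one kernel-verified Lean document; each statement's English description precedes it below -/
import Mathlib

section
/- If θ is a real number such that both cos θ and sin θ are rational, and tan θ = q/p with p, q coprime integers, then p² + q² is a perfect square. -/
/-!
Write `cos θ = a` and `sin θ = b` with `a, b ∈ ℚ`, so `a² + b² = 1` and `b / a = q / p`.
Then `p² + q² = p² (a² + b²) / a² = (p / a)²` is an integer that is the square of a rational,
hence the square of an integer. When `q / p = 0`, coprimality forces `{p, q} = {0, ±1}`.
-/

theorem Int.sq_add_sq_eq_one_of_gcd_eq_one_of_mul_eq_zero {p q : ℤ} (hpq : Int.gcd p q = 1)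
    (h : p * q = 0) : p ^ 2 + q ^ 2 = 1 := by
  rcases mul_eq_zero.1 h with rfl | rfl
  · rw [Int.gcd_zero_left] at hpq
    rw [← Int.natAbs_sq q, hpq]
    norm_num
  · rw [Int.gcd_zero_right] at hpq
    rw [← Int.natAbs_sq p, hpq]
    norm_num

theorem Rat.isSquare_sq_add_sq_of_div_eq {a b : ℚ} {p q : ℤ} (hab : a ^ 2 + b ^ 2 = 1)
    (ha : a ≠ 0) (hp : p ≠ 0) (h : b / a = q / p) : IsSquare (p ^ 2 + q ^ 2) := by
  have hpQ : (p : ℚ) ≠ 0 := by exact_mod_cast hp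
  have hcross : b * p = q * a := (div_eq_div_iff ha hpQ).1 h
  rw [← Rat.isSquare_intCast_iff]
  refine ⟨p / a, ?_⟩
  field_simp
  push_cast
  linear_combination (p : ℚ) ^ 2 * hab - (b * p + q * a) * hcross

theorem stmt_0_general (θ : ℝ)
    (hcosQ : ∃ a : ℚ, Real.cos θ = a) (hsinQ : ∃ b : ℚ, Real.sin θ = b)
    (p q : ℤ) (hpq : Int.gcd p q = 1) (htan : Real.tan θ = (q : ℝ) / (p : ℝ)) :
    ∃ k : ℤ, p ^ 2 + q ^ 2 = k ^ 2 := by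
  obtain ⟨a, ha⟩ := hcosQ
  obtain ⟨b, hb⟩ := hsinQ
  have hab : a ^ 2 + b ^ 2 = 1 := by
    exact_mod_cast ha ▸ hb ▸ Real.cos_sq_add_sin_sq θ
  have hdiv : b / a = q / p := by
    exact_mod_cast ha ▸ hb ▸ Real.tan_eq_sin_div_cos θ ▸ htan
  by_cases hqp : (q : ℚ) / p = 0
  · have hpq0 : p * q = 0 := by simpa [or_comm] using hqp
    exact ⟨1, by rw [Int.sq_add_sq_eq_one_of_gcd_eq_one_of_mul_eq_zero hpq hpq0]; norm_num⟩
  · have hp : p ≠ 0 := by rintro rfl; simp at hqp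
    have ha0 : a ≠ 0 := by rintro rfl; exact hqp (by rw [← hdiv, div_zero])
    exact (Rat.isSquare_sq_add_sq_of_div_eq hab ha0 hp hdiv).exists_sq

theorem stmt_0 (θ : ℝ) (hcos0 : Real.cos θ ≠ 0)
    (hcosQ : ∃ a : ℚ, Real.cos θ = a) (hsinQ : ∃ b : ℚ, Real.sin θ = b)
    (p q : ℤ) (hpq : Int.gcd p q = 1) (htan : Real.tan θ = (q : ℝ) / (p : ℝ)) :
    ∃ k : ℤ, p ^ 2 + q ^ 2 = k ^ 2 :=
  stmt_0_general θ hcosQ hsinQ p q hpq htan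
end

section
/- The set of angles θ with both cos θ and sin θ rational is dense in ℝ. -/
/-!
For rational `q`, the angle `2 arctan q` has rational cosine `(1 - q²)/(1 + q²)` and sine
`2q/(1 + q²)` (the tangent half-angle substitution). Since `t ↦ 2 arctan t` is continuous and maps
`ℝ` onto `(-π, π)`, the image of the dense set `ℚ` is dense in `[-π, π]`; the set is
`2π`-periodic, hence so is its closure, which is therefore all of `ℝ`.
-/

open Real Set Function

lemma Function.Periodic.mem_closure {G : Type*} [TopologicalSpace G] [AddGroup G]
    [ContinuousAdd G] {s : Set G} {c : G} (h : Periodic (· ∈ s) c) :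
    Periodic (· ∈ closure s) c := by
  have hs : (Homeomorph.addRight c) ⁻¹' s = s := Set.ext fun x => (h x).to_iff
  have hcl := (Homeomorph.addRight c).preimage_closure s
  rw [hs] at hcl
  exact fun x => congrArg (x ∈ ·) hcl

namespace Real

lemma cos_two_mul_arctan (x : ℝ) : cos (2 * arctan x) = (1 - x ^ 2) / (1 + x ^ 2) := by
  rw [cos_two_mul, cos_sq_arctan]
  field_simp
  ring

lemma sin_two_mul_arctan (x : ℝ) : sin (2 * arctan x) = 2 * x / (1 + x ^ 2) := by
  have hx : √(1 + x ^ 2) ^ 2 = 1 + x ^ 2 := sq_sqrt (by positivity)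
  rw [sin_two_mul, sin_arctan, cos_arctan]
  field_simp
  rw [hx]

end Real

def ratAngles : Set ℝ := {θ | (∃ a : ℚ, cos θ = a) ∧ ∃ b : ℚ, sin θ = b}

lemma two_mul_arctan_mem_ratAngles (q : ℚ) : 2 * arctan q ∈ ratAngles :=
  ⟨⟨(1 - q ^ 2) / (1 + q ^ 2), by push_cast; exact cos_two_mul_arctan q⟩,
    ⟨2 * q / (1 + q ^ 2), by push_cast; exact sin_two_mul_arctan q⟩⟩

lemma periodic_mem_ratAngles : Periodic (· ∈ ratAngles) (2 * π) := fun θ => by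
  simp only [ratAngles, mem_ofPred_eq, cos_add_two_pi, sin_add_two_pi]

lemma Ioo_subset_closure_ratAngles : Ioo (-π) π ⊆ closure ratAngles := by
  intro z hz
  have hz_eq : 2 * arctan (tan (z / 2)) = z := by
    rw [arctan_tan (by linarith [hz.1]) (by linarith [hz.2])]
    ring
  have hcont : Continuous fun t : ℝ => 2 * arctan t := by fun_prop
  refine closure_mono ?_ (image_closure_subset_closure_image hcont
    (s := range ((↑) : ℚ → ℝ)) ⟨tan (z / 2), Rat.denseRange_cast _, hz_eq⟩)
  rintro _ ⟨_, ⟨q, rfl⟩, rfl⟩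
  exact two_mul_arctan_mem_ratAngles q

lemma Icc_subset_closure_ratAngles : Icc (-π) π ⊆ closure ratAngles := by
  rw [← closure_Ioo (by linarith [pi_pos] : -π ≠ π)]
  exact closure_minimal Ioo_subset_closure_ratAngles isClosed_closure

theorem stmt_4 :
    Dense {θ : ℝ | (∃ a : ℚ, Real.cos θ = a) ∧ ∃ b : ℚ, Real.sin θ = b} := by
  intro x
  obtain ⟨y, hy, hxy⟩ :=
    periodic_mem_ratAngles.mem_closure.exists_mem_Ico two_pi_pos x (-π)
  rw [show -π + 2 * π = π by ring] at hy
  exact hxy ▸ Icc_subset_closure_ratAngles (Ico_subset_Icc_self hy)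
end

section
/- Every triangle in the plane can be approximated arbitrarily well by a triangle with rational side lengths and rational area: for any three non-collinear points A, B, C and any ε > 0 there exist points B', C' with |B − B'| < ε, |C − C'| < ε such that the triangle AB'C' has all three sides rational and rational area. -/
/-!
Translate `a` to the origin and rotate so that `bc` is horizontal; non-collinearity means that
`bc` then lies at a nonzero height `y₀`. Replace `y₀` by a nearby nonzero rational `y`, and `b`, `c`
by points `(x₁, y)`, `(x₂, y)` with `xᵢ` and `√(xᵢ² + y²)` rational: such `x` are dense in `ℝ`,
because for rational `k > 0` the point `((k² - y²) / 2k, y)` has norm `(k² + y²) / 2k`. The new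
triangle has third side `|x₁ - x₂|` and area `|x₁ - x₂| |y| / 2`, and the rigid motion back
preserves distances and area.
-/

open Complex ComplexConjugate Topology

lemma exists_rat_near_rat_hypot (a : ℝ) {y : ℚ} (hy : y ≠ 0) {δ : ℝ} (hδ : 0 < δ) :
    ∃ x r : ℚ, |(x : ℝ) - a| < δ ∧ √((x : ℝ) ^ 2 + (y : ℝ) ^ 2) = r := by
  set g : ℝ → ℝ := fun k => (k ^ 2 - y ^ 2) / (2 * k)
  set k₀ := a + √(a ^ 2 + y ^ 2)
  have hk₀ : 0 < k₀ := by
    have : |a| < √(a ^ 2 + y ^ 2) := by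
      rw [← Real.sqrt_sq_eq_abs]
      exact Real.sqrt_lt_sqrt (sq_nonneg a) (by simp [hy, sq_pos_of_ne_zero])
    linarith [neg_abs_le a]
  have hgk₀ : g k₀ = a := by
    have := Real.sq_sqrt (show 0 ≤ a ^ 2 + (y : ℝ) ^ 2 by positivity)
    simp only [g]
    field_simp
    linear_combination this
  have hg : ContinuousAt g k₀ := by fun_prop (disch := positivity)
  have hnhds : ∀ᶠ k in 𝓝 k₀, 0 < k ∧ |g k - a| < δ := by
    filter_upwards [Ioi_mem_nhds hk₀, hg.eventually (Metric.ball_mem_nhds _ hδ)] with k hk hgk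
    rw [hgk₀] at hgk
    exact ⟨hk, hgk⟩
  obtain ⟨_, ⟨hkpos, hgk⟩, k, rfl⟩ := mem_closure_iff_nhds.mp (Rat.denseRange_cast k₀) _ hnhds
  refine ⟨(k ^ 2 - y ^ 2) / (2 * k), (k ^ 2 + y ^ 2) / (2 * k), by push_cast; exact hgk, ?_⟩
  have hk : (k : ℝ) ≠ 0 := hkpos.ne'
  rw [Real.sqrt_eq_iff_eq_sq (by positivity) (by push_cast; positivity)]
  push_cast
  field_simp
  ring

lemma exists_rat_ne_zero_near {y : ℝ} (hy : y ≠ 0) {δ : ℝ} (hδ : 0 < δ) :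
    ∃ q : ℚ, q ≠ 0 ∧ |y - q| < δ := by
  obtain ⟨q, hqδ, hq⟩ := Rat.denseRange_cast.exists_mem_open (Metric.isOpen_ball.inter isOpen_ne)
    ⟨y, Metric.mem_ball_self hδ, hy⟩
  exact ⟨q, Rat.cast_ne_zero.mp hq, by rw [abs_sub_comm]; exact hqδ⟩

namespace Complex

lemma im_conj_mul_of_im_eq {z₁ z₂ : ℂ} (h : z₁.im = z₂.im) :
    (conj z₁ * z₂).im = (z₁.re - z₂.re) * z₁.im := by
  simp only [mul_im, conj_re, conj_im, h]
  ring

lemma im_conj_mul_ne_zero_of_not_collinear {a b c : ℂ} (h : ¬Collinear ℝ {a, b, c}) :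
    (conj (b - a) * (c - a)).im ≠ 0 := by
  intro h0
  apply h
  by_cases hab : b = a
  · simp [hab, collinear_pair]
  set u := b - a
  have hu : u ≠ 0 := sub_ne_zero.mpr hab
  have hreal : conj u * (c - a) = ((conj u * (c - a)).re : ℂ) := Complex.ext rfl (by simp [h0])
  have hc : c = AffineMap.lineMap a b ((conj u * (c - a)).re / ‖u‖ ^ 2) := by
    rw [AffineMap.lineMap_apply_module', real_smul, ofReal_div, ← hreal]
    have : (‖u‖ : ℂ) ≠ 0 := by simpa using hu
    field_simp
    rw [ofReal_pow, ← conj_mul']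
    ring
  have hmem : c ∈ line[ℝ, a, b] := hc ▸ AffineMap.lineMap_mem_affineSpan_pair _ _ _
  rw [Set.pair_comm, Set.insert_comm]
  exact collinear_insert_of_mem_affineSpan_pair hmem

lemma conj_mul_mul_of_norm_eq_one {w : ℂ} (hw : ‖w‖ = 1) (z₁ z₂ : ℂ) :
    conj (w * z₁) * (w * z₂) = conj z₁ * z₂ := by
  rw [map_mul, mul_mul_mul_comm, conj_mul', hw]
  simp

lemma dist_add_mul_of_norm_eq_one {w : ℂ} (hw : ‖w‖ = 1) (p z₁ z₂ : ℂ) :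
    dist (p + w * z₁) (p + w * z₂) = dist z₁ z₂ := by
  rw [dist_add_left, dist_eq, dist_eq, ← mul_sub, norm_mul, hw, one_mul]

/-- The last conjunct is the area, `|Im (conj (b - a) * (c - a))| / 2`; degenerate triangles
are allowed. -/
def IsRationalTriangle (a b c : ℂ) : Prop :=
  (∃ q : ℚ, dist a b = q) ∧ (∃ q : ℚ, dist a c = q) ∧ (∃ q : ℚ, dist b c = q) ∧
    ∃ q : ℚ, |(conj (b - a) * (c - a)).im| / 2 = q

lemma isRationalTriangle_add_mul_iff {w : ℂ} (hw : ‖w‖ = 1) (p a b c : ℂ) :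
    IsRationalTriangle (p + w * a) (p + w * b) (p + w * c) ↔ IsRationalTriangle a b c := by
  simp only [IsRationalTriangle, dist_add_mul_of_norm_eq_one hw, add_sub_add_left_eq_sub, ← mul_sub,
    conj_mul_mul_of_norm_eq_one hw]

lemma exists_isRationalTriangle_zero_near_of_im_eq {z₁ z₂ : ℂ} (h : z₁.im = z₂.im)
    (h0 : z₁.im ≠ 0) {ε : ℝ} (hε : 0 < ε) :
    ∃ ζ₁ ζ₂ : ℂ, dist z₁ ζ₁ < ε ∧ dist z₂ ζ₂ < ε ∧ IsRationalTriangle 0 ζ₁ ζ₂ := by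
  obtain ⟨y, hy0, hy⟩ := exists_rat_ne_zero_near h0 (half_pos hε)
  obtain ⟨x₁, r₁, hx₁, hr₁⟩ := exists_rat_near_rat_hypot z₁.re hy0 (half_pos hε)
  obtain ⟨x₂, r₂, hx₂, hr₂⟩ := exists_rat_near_rat_hypot z₂.re hy0 (half_pos hε)
  have hnear : ∀ (z : ℂ) (x : ℚ), |(x : ℝ) - z.re| < ε / 2 → |z.im - y| < ε / 2 →
      dist z ⟨x, y⟩ < ε := by
    intro z x hx hy
    calc dist z ⟨x, y⟩ ≤ |z.re - x| + |z.im - y| := by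
          simpa [dist_eq] using norm_le_abs_re_add_abs_im (z - ⟨x, y⟩)
      _ < ε / 2 + ε / 2 := by rw [abs_sub_comm] at hx; exact add_lt_add hx hy
      _ = ε := add_halves ε
  have hζ : (⟨x₁, y⟩ : ℂ).im = (⟨x₂, y⟩ : ℂ).im := rfl
  refine ⟨⟨x₁, y⟩, ⟨x₂, y⟩, hnear z₁ x₁ hx₁ hy, hnear z₂ x₂ hx₂ (h ▸ hy),
    ⟨r₁, ?_⟩, ⟨r₂, ?_⟩, ⟨|x₁ - x₂|, ?_⟩, ⟨|x₁ - x₂| * |y| / 2, ?_⟩⟩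
  · rwa [dist_zero_left, norm_def, normSq_mk, ← sq, ← sq]
  · rwa [dist_zero_left, norm_def, normSq_mk, ← sq, ← sq]
  · rw [dist_of_im_eq hζ, Real.dist_eq]
    push_cast
    rfl
  · rw [sub_zero, sub_zero, im_conj_mul_of_im_eq hζ, abs_mul]
    push_cast
    rfl

theorem exists_isRationalTriangle_near {a b c : ℂ} (h : ¬Collinear ℝ {a, b, c}) {ε : ℝ}
    (hε : 0 < ε) : ∃ b' c' : ℂ, dist b b' < ε ∧ dist c c' < ε ∧ IsRationalTriangle a b' c' := by
  have hcross := im_conj_mul_ne_zero_of_not_collinear h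
  have hbc : c - b ≠ 0 := by
    rintro hbc
    rw [sub_eq_zero.mp hbc, conj_mul'] at hcross
    norm_cast at hcross
  set w := (c - b) / (‖c - b‖ : ℂ)
  have hw : ‖w‖ = 1 := by simp [w, hbc]
  set z₁ := conj w * (b - a)
  set z₂ := conj w * (c - a)
  have hrot : ∀ p, p = a + w * (conj w * (p - a)) := by
    intro p
    rw [← mul_assoc, mul_conj', hw]
    simp
  have hz : z₁.im = z₂.im := by
    have : z₂ - z₁ = conj w * (c - b) := by ring
    rw [eq_comm, ← sub_eq_zero, ← sub_im, this, map_div₀, conj_ofReal, div_mul_eq_mul_div,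
      conj_mul', ← ofReal_pow, ← ofReal_div, ofReal_im]
  have hz₀ : z₁.im ≠ 0 := by
    rw [hrot b, hrot c, add_sub_cancel_left, add_sub_cancel_left, conj_mul_mul_of_norm_eq_one hw,
      im_conj_mul_of_im_eq hz] at hcross
    exact right_ne_zero_of_mul hcross
  obtain ⟨ζ₁, ζ₂, h₁, h₂, hζ⟩ := exists_isRationalTriangle_zero_near_of_im_eq hz hz₀ hε
  refine ⟨a + w * ζ₁, a + w * ζ₂, ?_, ?_, ?_⟩
  · rwa [hrot b, dist_add_mul_of_norm_eq_one hw]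
  · rwa [hrot c, dist_add_mul_of_norm_eq_one hw]
  · have := (isRationalTriangle_add_mul_iff hw a 0 ζ₁ ζ₂).mpr hζ
    rwa [mul_zero, add_zero] at this

end Complex

theorem AffineEquiv.collinear_triple_iff {k V P V₂ P₂ : Type*} [DivisionRing k] [AddCommGroup V]
    [Module k V] [AddTorsor V P] [AddCommGroup V₂] [Module k V₂] [AddTorsor V₂ P₂]
    (e : P ≃ᵃ[k] P₂) (p₁ p₂ p₃ : P) :
    Collinear k {e p₁, e p₂, e p₃} ↔ Collinear k {p₁, p₂, p₃} := by
  rw [← not_iff_not, ← affineIndependent_iff_not_collinear_set,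
    ← affineIndependent_iff_not_collinear_set, ← e.affineIndependent_iff]
  convert Iff.rfl
  ext i
  fin_cases i <;> rfl

theorem stmt_8 (A B C : EuclideanSpace ℝ (Fin 2))
    (h : ¬ Collinear ℝ ({A, B, C} : Set (EuclideanSpace ℝ (Fin 2))))
    (ε : ℝ) (hε : 0 < ε) :
    ∃ B' C' : EuclideanSpace ℝ (Fin 2),
      dist B B' < ε ∧ dist C C' < ε ∧
      (∃ q : ℚ, dist A B' = q) ∧ (∃ q : ℚ, dist A C' = q) ∧ (∃ q : ℚ, dist B' C' = q) ∧
      ∃ q : ℚ, |(B' 0 - A 0) * (C' 1 - A 1) - (B' 1 - A 1) * (C' 0 - A 0)| / 2 = q := by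
  set e := Complex.orthonormalBasisOneI.repr
  obtain ⟨a, rfl⟩ := e.surjective A
  obtain ⟨b, rfl⟩ := e.surjective B
  obtain ⟨c, rfl⟩ := e.surjective C
  have h' : ¬Collinear ℝ {a, b, c} :=
    fun hcol => h ((e.toLinearEquiv.toAffineEquiv.collinear_triple_iff a b c).mpr hcol)
  obtain ⟨b', c', hb, hc, hab, hac, hbc, harea⟩ := Complex.exists_isRationalTriangle_near h' hε
  refine ⟨e b', e c', ?_⟩
  simp only [e.dist_map]
  refine ⟨hb, hc, hab, hac, hbc, ?_⟩
  convert harea using 4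
  simp [e, mul_im]
  congr 1
  ring
end

section
/- Let P = (0,0), Q = (r,0) with r rational, and L the line y = tan(θ)·x with cos θ rational, 0 < θ < π/2. Then the set of points R on L with both d(P,R) and d(Q,R) rational is dense in L. -/
/-!
With `c = cos θ` and `K = r² sin² θ = r² (1 - c²)`, both rational and `K > 0`, the point at
arclength `t` on `L` has `d(P, R) = |t|` and `d(Q, R) = √((t - r c)² + K)`. Writing
`t = r c + (u - K/u)/2` with `u > 0` gives `√((t - r c)² + K) = (u + K/u)/2`, so every rational
`u > 0` yields a good point. The map `u ↦ (u - K/u)/2` is an increasing bijection from `(0, ∞)`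
onto `ℝ`, with inverse `s ↦ s + √(s² + K)`, hence it carries the dense set of positive rationals
to a dense subset of `ℝ`.
-/

open Set

section OrderedField

variable {F : Type*} [Field F] [LinearOrder F] [IsStrictOrderedRing F]

lemma sq_half_sub_div_add {u : F} (hu : u ≠ 0) (k : F) :
    ((u - k / u) / 2) ^ 2 + k = ((u + k / u) / 2) ^ 2 := by
  field_simp
  ring

lemma strictMonoOn_half_sub_div {k : F} (hk : 0 ≤ k) :
    StrictMonoOn (fun u : F => (u - k / u) / 2) (Ioi 0) := by
  intro u (hu : 0 < u) v _ huv
  have : k / v ≤ k / u := div_le_div_of_nonneg_left hk hu huv.le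
  simp only
  linarith

end OrderedField

lemma add_sqrt_sq_add_pos {k : ℝ} (hk : 0 < k) (s : ℝ) : 0 < s + √(s ^ 2 + k) := by
  have : |s| < √(s ^ 2 + k) := by
    rw [← Real.sqrt_sq_eq_abs]
    exact Real.sqrt_lt_sqrt (sq_nonneg s) (by linarith)
  linarith [neg_abs_le s]

lemma half_sub_div_add_sqrt_sq_add {k : ℝ} (hk : 0 < k) (s : ℝ) :
    let u := s + √(s ^ 2 + k)
    (u - k / u) / 2 = s := by
  intro u
  have hu : u ≠ 0 := (add_sqrt_sq_add_pos hk s).ne'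
  have hsq : √(s ^ 2 + k) ^ 2 = s ^ 2 + k := Real.sq_sqrt (by positivity)
  field_simp
  linear_combination hsq

theorem dense_setOf_rat_and_sqrt_sq_add_rat {a k : ℚ} (hk : 0 < k) :
    Dense {t : ℝ | (∃ q : ℚ, t = q) ∧ ∃ q : ℚ, √((t - a) ^ 2 + k) = q} := by
  have hk' : (0 : ℝ) < k := by exact_mod_cast hk
  set g : ℝ → ℝ := fun u => (u - k / u) / 2
  have hg : StrictMonoOn g (Ioi 0) := strictMonoOn_half_sub_div hk'.le
  refine dense_of_exists_between fun x y hxy => ?_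
  set ψ : ℝ → ℝ := fun s => s + √(s ^ 2 + k)
  have hψ_pos (s : ℝ) : ψ s ∈ Ioi 0 := add_sqrt_sq_add_pos hk' s
  have hgψ (s : ℝ) : g (ψ s) = s := half_sub_div_add_sqrt_sq_add hk' s
  have hψxy : ψ (x - a) < ψ (y - a) := by
    rw [← hg.lt_iff_lt (hψ_pos _) (hψ_pos _), hgψ, hgψ]
    linarith
  obtain ⟨u, hxu, huy⟩ := exists_rat_btwn hψxy
  have hu : (0 : ℝ) < u := (hψ_pos _).trans hxu
  have hgx := hg (hψ_pos _) hu hxu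
  have hgy := hg hu (hψ_pos _) huy
  rw [hgψ] at hgx hgy
  refine ⟨a + g u, ⟨⟨a + (u - k / u) / 2, by push_cast; rfl⟩, (u + k / u) / 2, ?_⟩, ?_, ?_⟩
  · rw [add_sub_cancel_left, sq_half_sub_div_add hu.ne', Real.sqrt_sq (by positivity)]
    push_cast
    rfl
  · linarith
  · linarith

lemma mul_sub_sq_add_mul_sq {R : Type*} [CommRing R] {c s : R} (hcs : c ^ 2 + s ^ 2 = 1) (t r : R) :
    (t * c - r) ^ 2 + (t * s) ^ 2 = (t - r * c) ^ 2 + r ^ 2 * s ^ 2 := by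
  linear_combination (t ^ 2 - r ^ 2) * hcs

/-- The point at arclength `t` on the line `L` through `P = (0,0)` at angle `θ` is
`R t = (t cos θ, t sin θ)`, and `Q = (r, 0)`; density in `L` is density of the parameters `t`. -/
theorem stmt_10 (r : ℝ) (hrQ : ∃ q : ℚ, r = q) (hr : 0 < r)
    (θ : ℝ) (hθ0 : 0 < θ) (hθ1 : θ < Real.pi / 2) (hcos : ∃ q : ℚ, Real.cos θ = q) :
    Dense {t : ℝ |
      (∃ q : ℚ, Real.sqrt ((t * Real.cos θ - 0) ^ 2 + (t * Real.sin θ - 0) ^ 2) = q) ∧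
      ∃ q : ℚ, Real.sqrt ((t * Real.cos θ - r) ^ 2 + (t * Real.sin θ - 0) ^ 2) = q} := by
  obtain ⟨r, rfl⟩ := hrQ
  obtain ⟨c, hc⟩ := hcos
  have hsin : 0 < Real.sin θ :=
    Real.sin_pos_of_pos_of_lt_pi hθ0 (hθ1.trans (by linarith [Real.pi_pos]))
  have hcs : (c : ℝ) ^ 2 + Real.sin θ ^ 2 = 1 := hc ▸ Real.cos_sq_add_sin_sq θ
  have hK : ((r ^ 2 * (1 - c ^ 2) : ℚ) : ℝ) = r ^ 2 * Real.sin θ ^ 2 := by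
    push_cast
    linear_combination -(r : ℝ) ^ 2 * hcs
  have hKpos : 0 < r ^ 2 * (1 - c ^ 2) := by
    exact_mod_cast hK ▸ (by positivity : (0 : ℝ) < r ^ 2 * Real.sin θ ^ 2)
  refine (dense_setOf_rat_and_sqrt_sq_add_rat (a := r * c) hKpos).mono ?_
  rintro _ ⟨⟨t, rfl⟩, p, hp⟩
  simp only [sub_zero, hc]
  refine ⟨⟨|t|, ?_⟩, p, ?_⟩
  · have : ((t : ℝ) * c) ^ 2 + (t * Real.sin θ) ^ 2 = (t : ℝ) ^ 2 := by
      linear_combination (t : ℝ) ^ 2 * hcs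
    rw [this, Real.sqrt_sq_eq_abs, Rat.cast_abs]
  · rw [mul_sub_sq_add_mul_sq hcs, ← hK, ← hp]
    push_cast
    ring_nf
end
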